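/- arXiv:1703.06542 — 5 statements merged into one kernel-verified Lean document; each statement's English description precedes it below -/
import Mathlib

section
/- Identify ℂ^m ⊗ ℂ^{n₁+n₂} with m × (n₁+n₂) complex matrices under the Frobenius (Hilbert–Schmidt) inner product, and embed ℂ^m ⊗ ℂ^{n₁} and ℂ^m ⊗ ℂ^{n₂} as the subspaces L and R of matrices supported on the first n₁ columns and last n₂ columns respectively. If S_L is an unextendible product basis of L and S_R is an unextendible product basis of R, then S_L ∪ S_R is an unextendible product basis of ℂ^m ⊗ ℂ^{n₁+n₂}. -/
/-- The Frobenius (Hilbert–Schmidt) inner product on complex matrices. -/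
noncomputable def frob {a b : ℕ} (M N : Matrix (Fin a) (Fin b) ℂ) : ℂ :=
  ∑ i, ∑ j, star (M i j) * N i j

/-- An unextendible product basis of `ℂ^a ⊗ ℂ^b`, viewed as `a × b` complex
matrices with the Frobenius inner product: a finite set of pairwise orthonormal
rank-1 matrices, of cardinality less than `a * b`, such that every nonzero
matrix orthogonal to all of its members has rank at least 2. -/
def IsUPB {a b : ℕ} (S : Finset (Matrix (Fin a) (Fin b) ℂ)) : Prop :=
  (∀ M ∈ S, M.rank = 1) ∧
  (∀ M ∈ S, ∀ N ∈ S, frob M N = if M = N then 1 else 0) ∧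
  S.card < a * b ∧
  ∀ N : Matrix (Fin a) (Fin b) ℂ, N ≠ 0 → (∀ M ∈ S, frob M N = 0) → 2 ≤ N.rank

/-- Embedding of `ℂ^m ⊗ ℂ^{n₁}` as the matrices supported on the first `n₁` columns. -/
def embedL {m n₁ n₂ : ℕ} (A : Matrix (Fin m) (Fin n₁) ℂ) :
    Matrix (Fin m) (Fin (n₁ + n₂)) ℂ :=
  Matrix.of fun i j => if h : (j : ℕ) < n₁ then A i ⟨j, h⟩ else 0

/-- Embedding of `ℂ^m ⊗ ℂ^{n₂}` as the matrices supported on the last `n₂` columns. -/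
def embedR {m n₁ n₂ : ℕ} (A : Matrix (Fin m) (Fin n₂) ℂ) :
    Matrix (Fin m) (Fin (n₁ + n₂)) ℂ :=
  Matrix.of fun i j => if h : (j : ℕ) < n₁ then 0
    else A i ⟨(j : ℕ) - n₁, by have := j.isLt; omega⟩

section Helpers

variable {m n₁ n₂ : ℕ}

@[simp] lemma embedL_castAdd (A : Matrix (Fin m) (Fin n₁) ℂ) (i : Fin m) (j : Fin n₁) :
    embedL (n₂ := n₂) A i (Fin.castAdd n₂ j) = A i j := by
  simp only [embedL, Matrix.of_apply, Fin.coe_castAdd, j.isLt, dif_pos]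

@[simp] lemma embedL_natAdd (A : Matrix (Fin m) (Fin n₁) ℂ) (i : Fin m) (j : Fin n₂) :
    embedL (n₂ := n₂) A i (Fin.natAdd n₁ j) = 0 := by
  simp only [embedL, Matrix.of_apply, Fin.coe_natAdd]
  rw [dif_neg (by omega)]

@[simp] lemma embedR_castAdd (A : Matrix (Fin m) (Fin n₂) ℂ) (i : Fin m) (j : Fin n₁) :
    embedR (n₁ := n₁) A i (Fin.castAdd n₂ j) = 0 := by
  simp only [embedR, Matrix.of_apply, Fin.coe_castAdd, j.isLt, dif_pos]

@[simp] lemma embedR_natAdd (A : Matrix (Fin m) (Fin n₂) ℂ) (i : Fin m) (j : Fin n₂) :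
    embedR (n₁ := n₁) A i (Fin.natAdd n₁ j) = A i j := by
  simp only [embedR, Matrix.of_apply, Fin.coe_natAdd]
  rw [dif_neg (by omega)]
  congr 1
  ext
  simp

lemma rank_embedL (A : Matrix (Fin m) (Fin n₁) ℂ) :
    (embedL (n₂ := n₂) A).rank = A.rank := by
  have h : LinearMap.range (embedL (n₂ := n₂) A).mulVecLin = LinearMap.range A.mulVecLin := by
    apply le_antisymm
    · rintro x ⟨v, rfl⟩
      refine ⟨fun j => v (Fin.castAdd n₂ j), ?_⟩
      ext i
      simp only [Matrix.mulVecLin_apply, Matrix.mulVec, dotProduct]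
      rw [Fin.sum_univ_add]
      simp
    · rintro x ⟨v, rfl⟩
      refine ⟨fun j => if h : (j : ℕ) < n₁ then v ⟨j, h⟩ else 0, ?_⟩
      ext i
      simp only [Matrix.mulVecLin_apply, Matrix.mulVec, dotProduct]
      rw [Fin.sum_univ_add]
      simp
  unfold Matrix.rank
  rw [h]

lemma rank_embedR (A : Matrix (Fin m) (Fin n₂) ℂ) :
    (embedR (n₁ := n₁) A).rank = A.rank := by
  have h : LinearMap.range (embedR (n₁ := n₁) A).mulVecLin = LinearMap.range A.mulVecLin := by
    apply le_antisymm
    · rintro x ⟨v, rfl⟩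
      refine ⟨fun j => v (Fin.natAdd n₁ j), ?_⟩
      ext i
      simp only [Matrix.mulVecLin_apply, Matrix.mulVec, dotProduct]
      rw [Fin.sum_univ_add]
      simp
    · rintro x ⟨v, rfl⟩
      refine ⟨fun j => if h : (j : ℕ) < n₁ then 0 else v ⟨(j : ℕ) - n₁, by have := j.isLt; omega⟩, ?_⟩
      ext i
      simp only [Matrix.mulVecLin_apply, Matrix.mulVec, dotProduct]
      rw [Fin.sum_univ_add]
      simp
  unfold Matrix.rank
  rw [h]

lemma rank_subL_le (N : Matrix (Fin m) (Fin (n₁ + n₂)) ℂ) :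
    (N.submatrix id (Fin.castAdd n₂)).rank ≤ N.rank := by
  have h : LinearMap.range (N.submatrix id (Fin.castAdd n₂)).mulVecLin ≤
      LinearMap.range N.mulVecLin := by
    rintro x ⟨v, rfl⟩
    refine ⟨fun j => if h : (j : ℕ) < n₁ then v ⟨j, h⟩ else 0, ?_⟩
    ext i
    simp only [Matrix.mulVecLin_apply, Matrix.mulVec, dotProduct]
    rw [Fin.sum_univ_add]
    simp [Matrix.submatrix]
  exact Submodule.finrank_mono h

lemma rank_subR_le (N : Matrix (Fin m) (Fin (n₁ + n₂)) ℂ) :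
    (N.submatrix id (Fin.natAdd n₁)).rank ≤ N.rank := by
  have h : LinearMap.range (N.submatrix id (Fin.natAdd n₁)).mulVecLin ≤
      LinearMap.range N.mulVecLin := by
    rintro x ⟨v, rfl⟩
    refine ⟨fun j => if h : (j : ℕ) < n₁ then 0 else v ⟨(j : ℕ) - n₁, by have := j.isLt; omega⟩, ?_⟩
    ext i
    simp only [Matrix.mulVecLin_apply, Matrix.mulVec, dotProduct]
    rw [Fin.sum_univ_add]
    simp [Matrix.submatrix]
  exact Submodule.finrank_mono h

lemma frob_embedL (M : Matrix (Fin m) (Fin n₁) ℂ) (N : Matrix (Fin m) (Fin (n₁ + n₂)) ℂ) :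
    frob (embedL (n₂ := n₂) M) N = frob M (N.submatrix id (Fin.castAdd n₂)) := by
  unfold frob
  refine Finset.sum_congr rfl fun i _ => ?_
  rw [Fin.sum_univ_add]
  simp [Matrix.submatrix]

lemma frob_embedR (M : Matrix (Fin m) (Fin n₂) ℂ) (N : Matrix (Fin m) (Fin (n₁ + n₂)) ℂ) :
    frob (embedR (n₁ := n₁) M) N = frob M (N.submatrix id (Fin.natAdd n₁)) := by
  unfold frob
  refine Finset.sum_congr rfl fun i _ => ?_
  rw [Fin.sum_univ_add]
  simp [Matrix.submatrix]

@[simp] lemma subL_embedL (A : Matrix (Fin m) (Fin n₁) ℂ) :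
    (embedL (n₂ := n₂) A).submatrix id (Fin.castAdd n₂) = A := by
  ext i j; simp [Matrix.submatrix]

@[simp] lemma subR_embedR (A : Matrix (Fin m) (Fin n₂) ℂ) :
    (embedR (n₁ := n₁) A).submatrix id (Fin.natAdd n₁) = A := by
  ext i j; simp [Matrix.submatrix]

@[simp] lemma subR_embedL (A : Matrix (Fin m) (Fin n₁) ℂ) :
    (embedL (n₂ := n₂) A).submatrix id (Fin.natAdd n₁) = 0 := by
  ext i j; simp [Matrix.submatrix]

@[simp] lemma subL_embedR (A : Matrix (Fin m) (Fin n₂) ℂ) :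
    (embedR (n₁ := n₁) A).submatrix id (Fin.castAdd n₂) = 0 := by
  ext i j; simp [Matrix.submatrix]

lemma embedL_injective : Function.Injective (embedL (m := m) (n₁ := n₁) (n₂ := n₂)) := by
  intro A B h
  have := congrArg (fun X => X.submatrix id (Fin.castAdd n₂)) h
  simpa using this

lemma embedR_injective : Function.Injective (embedR (m := m) (n₁ := n₁) (n₂ := n₂)) := by
  intro A B h
  have := congrArg (fun X => X.submatrix id (Fin.natAdd n₁)) h
  simpa using this

lemma embedL_ne_embedR {A : Matrix (Fin m) (Fin n₁) ℂ} {B : Matrix (Fin m) (Fin n₂) ℂ}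
    (hA : A ≠ 0) : embedL (n₂ := n₂) A ≠ embedR (n₁ := n₁) B := by
  intro h
  apply hA
  have := congrArg (fun X => X.submatrix id (Fin.castAdd n₂)) h
  simpa using this

lemma frob_zero {a b : ℕ} (M : Matrix (Fin a) (Fin b) ℂ) : frob M 0 = 0 := by
  simp [frob]

lemma decompose (N : Matrix (Fin m) (Fin (n₁ + n₂)) ℂ)
    (hl : N.submatrix id (Fin.castAdd n₂) = 0) (hr : N.submatrix id (Fin.natAdd n₁) = 0) :
    N = 0 := by
  ext i j
  rcases lt_or_ge (j : ℕ) n₁ with h | h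
  · have := congrFun (congrFun hl i) ⟨j, h⟩
    simpa [Matrix.submatrix, Fin.ext_iff] using this
  · have hj : (j : ℕ) - n₁ < n₂ := by have := j.isLt; omega
    have := congrFun (congrFun hr i) ⟨(j : ℕ) - n₁, hj⟩
    simp only [Matrix.submatrix_apply, id, Matrix.zero_apply] at this
    have hcast : Fin.natAdd n₁ (⟨(j : ℕ) - n₁, hj⟩ : Fin n₂) = j := by
      ext; simp; omega
    rwa [hcast] at this

end Helpers

/-- If `S_L` is a UPB of `ℂ^m ⊗ ℂ^{n₁}` and `S_R` is a UPB of `ℂ^m ⊗ ℂ^{n₂}`,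
then, embedded as the left and right column blocks, their union is a UPB of
`ℂ^m ⊗ ℂ^{n₁+n₂}`. -/
theorem union_of_UPBs_is_UPB {m n₁ n₂ : ℕ}
    (S_L : Finset (Matrix (Fin m) (Fin n₁) ℂ))
    (S_R : Finset (Matrix (Fin m) (Fin n₂) ℂ))
    (hL : IsUPB S_L) (hR : IsUPB S_R) :
    IsUPB (S_L.image (embedL (n₂ := n₂)) ∪ S_R.image (embedR (n₁ := n₁))) := by
  obtain ⟨hL1, hL2, hL3, hL4⟩ := hL
  obtain ⟨hR1, hR2, hR3, hR4⟩ := hR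
  have hLne : ∀ A ∈ S_L, A ≠ 0 := fun A hA h0 => by
    have := hL1 A hA; rw [h0, Matrix.rank_zero] at this; exact absurd this (by norm_num)
  have hRne : ∀ A ∈ S_R, A ≠ 0 := fun A hA h0 => by
    have := hR1 A hA; rw [h0, Matrix.rank_zero] at this; exact absurd this (by norm_num)
  have memcase : ∀ M ∈ S_L.image (embedL (n₂ := n₂)) ∪ S_R.image (embedR (n₁ := n₁)),
      (∃ A ∈ S_L, M = embedL A) ∨ (∃ A ∈ S_R, M = embedR A) := by
    intro M hM
    rcases Finset.mem_union.1 hM with h | h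
    · obtain ⟨A, hA, rfl⟩ := Finset.mem_image.1 h; exact Or.inl ⟨A, hA, rfl⟩
    · obtain ⟨A, hA, rfl⟩ := Finset.mem_image.1 h; exact Or.inr ⟨A, hA, rfl⟩
  refine ⟨?_, ?_, ?_, ?_⟩
  · intro M hM
    rcases memcase M hM with ⟨A, hA, rfl⟩ | ⟨A, hA, rfl⟩
    · rw [rank_embedL]; exact hL1 A hA
    · rw [rank_embedR]; exact hR1 A hA
  · intro M hM N hN
    rcases memcase M hM with ⟨A, hA, rfl⟩ | ⟨A, hA, rfl⟩ <;>
      rcases memcase N hN with ⟨B, hB, rfl⟩ | ⟨B, hB, rfl⟩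
    · rw [frob_embedL, subL_embedL, hL2 A hA B hB]
      simp only [embedL_injective.eq_iff]
    · rw [frob_embedL, subL_embedR, frob_zero, if_neg (embedL_ne_embedR (hLne A hA))]
    · rw [frob_embedR, subR_embedL, frob_zero,
        if_neg (Ne.symm (embedL_ne_embedR (hLne B hB)))]
    · rw [frob_embedR, subR_embedR, hR2 A hA B hB]
      simp only [embedR_injective.eq_iff]
  · calc (S_L.image (embedL (n₂ := n₂)) ∪ S_R.image (embedR (n₁ := n₁))).card
        ≤ (S_L.image (embedL (n₂ := n₂))).card + (S_R.image (embedR (n₁ := n₁))).card :=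
          Finset.card_union_le _ _
      _ ≤ S_L.card + S_R.card := add_le_add Finset.card_image_le Finset.card_image_le
      _ < m * n₁ + m * n₂ := Nat.add_lt_add hL3 hR3
      _ = m * (n₁ + n₂) := (mul_add m n₁ n₂).symm
  · intro N hN horth
    by_cases hNL : N.submatrix id (Fin.castAdd n₂) = 0
    · by_cases hNR : N.submatrix id (Fin.natAdd n₁) = 0
      · exact absurd (decompose N hNL hNR) hN
      · refine le_trans (hR4 _ hNR fun M hM => ?_) (rank_subR_le N)
        have := horth (embedR M) (Finset.mem_union_right _ (Finset.mem_image_of_mem _ hM))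
        rwa [frob_embedR] at this
    · refine le_trans (hL4 _ hNL fun M hM => ?_) (rank_subL_le N)
      have := horth (embedL M) (Finset.mem_union_left _ (Finset.mem_image_of_mem _ hM))
      rwa [frob_embedL] at this
end

section
/- With the matrix identification of bipartite states, suppose for each (i,j) ∈ {1,2}² the set S_{ij} is an unextendible product basis of ℂ^{m_i} ⊗ ℂ^{n_j} with missing number k_{ij} (i.e., |S_{ij}| = m_i n_j − k_{ij}). Embedding these four spaces as the four blocks of (m₁+m₂) × (n₁+n₂) matrices, the union S₁₁ ∪ S₁₂ ∪ S₂₁ ∪ S₂₂ is an unextendible product basis of ℂ^{m₁+m₂} ⊗ ℂ^{n₁+n₂} with missing number k₁₁ + k₁₂ + k₂₁ + k₂₂. -/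
/-- Embedding of `ℂ^{m₁} ⊗ ℂ^{n₁}` as the top-left block. -/
def e11 {m₁ m₂ n₁ n₂ : ℕ} (A : Matrix (Fin m₁) (Fin n₁) ℂ) :
    Matrix (Fin (m₁ + m₂)) (Fin (n₁ + n₂)) ℂ :=
  Matrix.of fun i j =>
    if hi : (i : ℕ) < m₁ then if hj : (j : ℕ) < n₁ then A ⟨i, hi⟩ ⟨j, hj⟩ else 0 else 0

/-- Embedding of `ℂ^{m₁} ⊗ ℂ^{n₂}` as the top-right block. -/
def e12 {m₁ m₂ n₁ n₂ : ℕ} (A : Matrix (Fin m₁) (Fin n₂) ℂ) :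
    Matrix (Fin (m₁ + m₂)) (Fin (n₁ + n₂)) ℂ :=
  Matrix.of fun i j =>
    if hi : (i : ℕ) < m₁ then if hj : (j : ℕ) < n₁ then 0
      else A ⟨i, hi⟩ ⟨(j : ℕ) - n₁, by have := j.isLt; omega⟩ else 0

/-- Embedding of `ℂ^{m₂} ⊗ ℂ^{n₁}` as the bottom-left block. -/
def e21 {m₁ m₂ n₁ n₂ : ℕ} (A : Matrix (Fin m₂) (Fin n₁) ℂ) :
    Matrix (Fin (m₁ + m₂)) (Fin (n₁ + n₂)) ℂ :=
  Matrix.of fun i j =>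
    if hi : (i : ℕ) < m₁ then 0
    else if hj : (j : ℕ) < n₁ then A ⟨(i : ℕ) - m₁, by have := i.isLt; omega⟩ ⟨j, hj⟩ else 0

/-- Embedding of `ℂ^{m₂} ⊗ ℂ^{n₂}` as the bottom-right block. -/
def e22 {m₁ m₂ n₁ n₂ : ℕ} (A : Matrix (Fin m₂) (Fin n₂) ℂ) :
    Matrix (Fin (m₁ + m₂)) (Fin (n₁ + n₂)) ℂ :=
  Matrix.of fun i j =>
    if hi : (i : ℕ) < m₁ then 0
    else if hj : (j : ℕ) < n₁ then 0
      else A ⟨(i : ℕ) - m₁, by have := i.isLt; omega⟩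
             ⟨(j : ℕ) - n₁, by have := j.isLt; omega⟩

noncomputable def scat {p P q Q : ℕ} (f : Fin p → Fin P) (g : Fin q → Fin Q)
    (A : Matrix (Fin p) (Fin q) ℂ) : Matrix (Fin P) (Fin Q) ℂ :=
  Matrix.of fun i j => ∑ a, ∑ b, if i = f a ∧ j = g b then A a b else 0

section scatlemmas
variable {p P q Q p' q' : ℕ} {f : Fin p → Fin P} {g : Fin q → Fin Q}
  {f' : Fin p' → Fin P} {g' : Fin q' → Fin Q}

lemma scat_submatrix (hf : Function.Injective f) (hg : Function.Injective g)
    (A : Matrix (Fin p) (Fin q) ℂ) : (scat f g A).submatrix f g = A := by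
  ext a b
  simp [scat, hf.eq_iff, hg.eq_iff, ite_and, Finset.sum_ite_eq]

lemma scat_injective (hf : Function.Injective f) (hg : Function.Injective g) :
    Function.Injective (scat f g) := fun A B h => by
  rw [← scat_submatrix hf hg A, ← scat_submatrix hf hg B, h]

lemma frob_scat (f : Fin p → Fin P) (g : Fin q → Fin Q)
    (A : Matrix (Fin p) (Fin q) ℂ) (N : Matrix (Fin P) (Fin Q) ℂ) :
    frob (scat f g A) N = frob A (N.submatrix f g) := by
  unfold frob
  have key : ∀ i j, star (scat f g A i j) * N i j
      = ∑ a, ∑ b, if i = f a ∧ j = g b then star (A a b) * N i j else 0 := by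
    intro i j
    simp only [scat, Matrix.of_apply, star_sum, apply_ite (star : ℂ → ℂ), star_zero,
      Finset.sum_mul, ite_mul, zero_mul]
  calc ∑ i, ∑ j, star (scat f g A i j) * N i j
      = ∑ i, ∑ j, ∑ a, ∑ b, if i = f a ∧ j = g b then star (A a b) * N i j else 0 := by
        simp only [key]
    _ = ∑ i, ∑ a, ∑ j, ∑ b, if i = f a ∧ j = g b then star (A a b) * N i j else 0 :=
        Finset.sum_congr rfl fun i _ => Finset.sum_comm
    _ = ∑ a, ∑ i, ∑ j, ∑ b, if i = f a ∧ j = g b then star (A a b) * N i j else 0 :=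
        Finset.sum_comm
    _ = ∑ a, ∑ i, ∑ b, ∑ j, if i = f a ∧ j = g b then star (A a b) * N i j else 0 :=
        Finset.sum_congr rfl fun a _ => Finset.sum_congr rfl fun i _ => Finset.sum_comm
    _ = ∑ a, ∑ b, ∑ i, ∑ j, if i = f a ∧ j = g b then star (A a b) * N i j else 0 :=
        Finset.sum_congr rfl fun a _ => Finset.sum_comm
    _ = ∑ a, ∑ b, star (A a b) * N (f a) (g b) := by
        refine Finset.sum_congr rfl fun a _ => Finset.sum_congr rfl fun b _ => ?_
        simp [ite_and, Finset.sum_ite_eq']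
    _ = ∑ a, ∑ b, star (A a b) * (N.submatrix f g) a b := rfl

lemma frob_scat_same (hf : Function.Injective f) (hg : Function.Injective g)
    (A B : Matrix (Fin p) (Fin q) ℂ) :
    frob (scat f g A) (scat f g B) = frob A B := by
  rw [frob_scat, scat_submatrix hf hg]

lemma frob_scat_disj
    (h : (∀ a a', f a ≠ f' a') ∨ (∀ b b', g b ≠ g' b'))
    (A : Matrix (Fin p) (Fin q) ℂ) (B : Matrix (Fin p') (Fin q') ℂ) :
    frob (scat f g A) (scat f' g' B) = 0 := by
  rw [frob_scat]
  have hz : (scat f' g' B).submatrix f g = 0 := by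
    ext a b
    simp only [Matrix.submatrix_apply, Matrix.zero_apply, scat, Matrix.of_apply]
    refine Finset.sum_eq_zero fun a' _ => Finset.sum_eq_zero fun b' _ => ?_
    rw [if_neg]
    rintro ⟨h1, h2⟩
    rcases h with h | h
    · exact h a a' h1
    · exact h b b' h2
  rw [hz]
  simp [frob]

lemma rank_submatrix_le' {l m n o : Type*} [Fintype l] [Fintype m] [Fintype n] [Fintype o]
    [DecidableEq m] [DecidableEq n]
    (A : Matrix m n ℂ) (f : l → m) (g : o → n) : (A.submatrix f g).rank ≤ A.rank := by
  have h : A.submatrix f g =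
      ((1 : Matrix m m ℂ).submatrix f (Equiv.refl m)) * A *
      ((1 : Matrix n n ℂ).submatrix (Equiv.refl n) g) := by
    rw [Matrix.one_submatrix_mul, Matrix.mul_submatrix_one]
    simp
  rw [h]
  exact (Matrix.rank_mul_le_left _ _).trans (Matrix.rank_mul_le_right _ _)

lemma scat_eq_mul (f : Fin p → Fin P) (g : Fin q → Fin Q)
    (A : Matrix (Fin p) (Fin q) ℂ) :
    scat f g A = ((1 : Matrix (Fin P) (Fin P) ℂ).submatrix id f) * A *
      ((1 : Matrix (Fin Q) (Fin Q) ℂ).submatrix g id) := by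
  ext i j
  simp only [scat, Matrix.of_apply, Matrix.mul_apply, Matrix.submatrix_apply, id_eq,
    Matrix.one_apply, Finset.sum_mul, Finset.mul_sum, ite_mul, mul_ite, one_mul, mul_one,
    zero_mul, mul_zero]
  rw [Finset.sum_comm]
  refine Finset.sum_congr rfl fun b _ => ?_
  by_cases h2 : g b = j
  · rw [if_pos h2]
    refine Finset.sum_congr rfl fun a _ => ?_
    have : (j = g b) = True := eq_true h2.symm
    simp [ite_and, this]
  · rw [if_neg h2]
    refine Finset.sum_eq_zero fun a _ => ?_
    rw [if_neg]
    rintro ⟨-, h⟩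
    exact h2 h.symm

lemma rank_scat (hf : Function.Injective f) (hg : Function.Injective g)
    (A : Matrix (Fin p) (Fin q) ℂ) : (scat f g A).rank = A.rank := by
  refine le_antisymm ?_ ?_
  · rw [scat_eq_mul]
    exact (Matrix.rank_mul_le_left _ _).trans (Matrix.rank_mul_le_right _ _)
  · conv_lhs => rw [← scat_submatrix hf hg A]
    exact rank_submatrix_le' _ _ _

end scatlemmas

lemma ne_of_frob {a b : ℕ} {M N : Matrix (Fin a) (Fin b) ℂ}
    (hMM : frob M M = 1) (hMN : frob M N = 0) : M ≠ N := fun h => by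
  subst h; rw [hMN] at hMM; simp at hMM

lemma natAdd_inj (m k : ℕ) : Function.Injective (Fin.natAdd m : Fin k → Fin (m + k)) := by
  intro a b h
  rw [Fin.ext_iff] at h ⊢
  simpa using h

lemma castAdd_ne_natAdd {m k : ℕ} (a : Fin m) (a' : Fin k) :
    Fin.castAdd k a ≠ Fin.natAdd m a' := by
  intro h; rw [Fin.ext_iff] at h; simp at h; omega

lemma natAdd_ne_castAdd {m k : ℕ} (a : Fin k) (a' : Fin m) :
    Fin.natAdd m a ≠ Fin.castAdd k a' := by
  intro h; rw [Fin.ext_iff] at h; simp at h; omega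

lemma isUPB_nonempty {a b : ℕ} {S : Finset (Matrix (Fin a) (Fin b) ℂ)}
    (h : IsUPB S) : S.Nonempty := by
  by_contra hS
  rw [Finset.not_nonempty_iff_eq_empty] at hS
  have hab : 0 < a * b := lt_of_le_of_lt (Nat.zero_le _) h.2.2.1
  rcases Nat.eq_zero_or_pos a with rfl | ha
  · simp at hab
  rcases Nat.eq_zero_or_pos b with rfl | hb
  · simp at hab
  have hf : Function.Injective (fun _ : Fin 1 => (⟨0, ha⟩ : Fin a)) :=
    fun x y _ => Subsingleton.elim x y
  have hg : Function.Injective (fun _ : Fin 1 => (⟨0, hb⟩ : Fin b)) :=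
    fun x y _ => Subsingleton.elim x y
  set N := scat (fun _ : Fin 1 => (⟨0, ha⟩ : Fin a)) (fun _ : Fin 1 => (⟨0, hb⟩ : Fin b))
    (1 : Matrix (Fin 1) (Fin 1) ℂ) with hNdef
  have hN0 : N ≠ 0 := by
    intro h0
    have := scat_submatrix hf hg (1 : Matrix (Fin 1) (Fin 1) ℂ)
    rw [← hNdef, h0] at this
    have h1 := congrFun (congrFun this 0) 0
    simp at h1
  have hrank : N.rank = 1 := by
    rw [hNdef, rank_scat hf hg, Matrix.rank_one]
    simp
  have h2 := h.2.2.2 N hN0 (by simp [hS])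
  omega


section eqs
variable {m₁ m₂ n₁ n₂ : ℕ}

lemma e11_eq (A : Matrix (Fin m₁) (Fin n₁) ℂ) :
    e11 (m₂ := m₂) (n₂ := n₂) A = scat (Fin.castAdd m₂) (Fin.castAdd n₂) A := by
  ext i j
  simp only [e11, scat, Matrix.of_apply]
  by_cases hi : (i : ℕ) < m₁
  · by_cases hj : (j : ℕ) < n₁
    · rw [dif_pos hi, dif_pos hj]
      have h1 : ∀ a : Fin m₁, (i = Fin.castAdd m₂ a) ↔ (a = ⟨i, hi⟩) := by
        intro a; rw [Fin.ext_iff, Fin.ext_iff]; simp; omega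
      have h2 : ∀ b : Fin n₁, (j = Fin.castAdd n₂ b) ↔ (b = ⟨j, hj⟩) := by
        intro b; rw [Fin.ext_iff, Fin.ext_iff]; simp; omega
      simp [h1, h2, ite_and, Finset.sum_ite_eq']
    · rw [dif_pos hi, dif_neg hj]
      symm; refine Finset.sum_eq_zero fun a _ => Finset.sum_eq_zero fun b _ => ?_
      rw [if_neg]; rintro ⟨-, h⟩; rw [Fin.ext_iff] at h; simp at h; omega
  · rw [dif_neg hi]
    symm; refine Finset.sum_eq_zero fun a _ => Finset.sum_eq_zero fun b _ => ?_
    rw [if_neg]; rintro ⟨h, -⟩; rw [Fin.ext_iff] at h; simp at h; omega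

lemma e12_eq (A : Matrix (Fin m₁) (Fin n₂) ℂ) :
    e12 (m₂ := m₂) (n₁ := n₁) A = scat (Fin.castAdd m₂) (Fin.natAdd n₁) A := by
  ext i j
  simp only [e12, scat, Matrix.of_apply]
  by_cases hi : (i : ℕ) < m₁
  · by_cases hj : (j : ℕ) < n₁
    · rw [dif_pos hi, dif_pos hj]
      symm; refine Finset.sum_eq_zero fun a _ => Finset.sum_eq_zero fun b _ => ?_
      rw [if_neg]; rintro ⟨-, h⟩; rw [Fin.ext_iff] at h; simp at h; omega
    · rw [dif_pos hi, dif_neg hj]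
      have h1 : ∀ a : Fin m₁, (i = Fin.castAdd m₂ a) ↔ (a = ⟨i, hi⟩) := by
        intro a; rw [Fin.ext_iff, Fin.ext_iff]; simp; omega
      have h2 : ∀ b : Fin n₂, (j = Fin.natAdd n₁ b) ↔ (b = ⟨(j : ℕ) - n₁, by have := j.isLt; omega⟩) := by
        intro b; rw [Fin.ext_iff, Fin.ext_iff]; simp; omega
      simp [h1, h2, ite_and, Finset.sum_ite_eq']
  · rw [dif_neg hi]
    symm; refine Finset.sum_eq_zero fun a _ => Finset.sum_eq_zero fun b _ => ?_
    rw [if_neg]; rintro ⟨h, -⟩; rw [Fin.ext_iff] at h; simp at h; omega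

lemma e21_eq (A : Matrix (Fin m₂) (Fin n₁) ℂ) :
    e21 (m₁ := m₁) (n₂ := n₂) A = scat (Fin.natAdd m₁) (Fin.castAdd n₂) A := by
  ext i j
  simp only [e21, scat, Matrix.of_apply]
  by_cases hi : (i : ℕ) < m₁
  · rw [dif_pos hi]
    symm; refine Finset.sum_eq_zero fun a _ => Finset.sum_eq_zero fun b _ => ?_
    rw [if_neg]; rintro ⟨h, -⟩; rw [Fin.ext_iff] at h; simp at h; omega
  · by_cases hj : (j : ℕ) < n₁
    · rw [dif_neg hi, dif_pos hj]
      have h1 : ∀ a : Fin m₂, (i = Fin.natAdd m₁ a) ↔ (a = ⟨(i : ℕ) - m₁, by have := i.isLt; omega⟩) := by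
        intro a; rw [Fin.ext_iff, Fin.ext_iff]; simp; omega
      have h2 : ∀ b : Fin n₁, (j = Fin.castAdd n₂ b) ↔ (b = ⟨j, hj⟩) := by
        intro b; rw [Fin.ext_iff, Fin.ext_iff]; simp; omega
      simp [h1, h2, ite_and, Finset.sum_ite_eq']
    · rw [dif_neg hi, dif_neg hj]
      symm; refine Finset.sum_eq_zero fun a _ => Finset.sum_eq_zero fun b _ => ?_
      rw [if_neg]; rintro ⟨-, h⟩; rw [Fin.ext_iff] at h; simp at h; omega

lemma e22_eq (A : Matrix (Fin m₂) (Fin n₂) ℂ) :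
    e22 (m₁ := m₁) (n₁ := n₁) A = scat (Fin.natAdd m₁) (Fin.natAdd n₁) A := by
  ext i j
  simp only [e22, scat, Matrix.of_apply]
  by_cases hi : (i : ℕ) < m₁
  · rw [dif_pos hi]
    symm; refine Finset.sum_eq_zero fun a _ => Finset.sum_eq_zero fun b _ => ?_
    rw [if_neg]; rintro ⟨h, -⟩; rw [Fin.ext_iff] at h; simp at h; omega
  · by_cases hj : (j : ℕ) < n₁
    · rw [dif_neg hi, dif_pos hj]
      symm; refine Finset.sum_eq_zero fun a _ => Finset.sum_eq_zero fun b _ => ?_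
      rw [if_neg]; rintro ⟨-, h⟩; rw [Fin.ext_iff] at h; simp at h; omega
    · rw [dif_neg hi, dif_neg hj]
      have h1 : ∀ a : Fin m₂, (i = Fin.natAdd m₁ a) ↔ (a = ⟨(i : ℕ) - m₁, by have := i.isLt; omega⟩) := by
        intro a; rw [Fin.ext_iff, Fin.ext_iff]; simp; omega
      have h2 : ∀ b : Fin n₂, (j = Fin.natAdd n₁ b) ↔ (b = ⟨(j : ℕ) - n₁, by have := j.isLt; omega⟩) := by
        intro b; rw [Fin.ext_iff, Fin.ext_iff]; simp; omega
      simp [h1, h2, ite_and, Finset.sum_ite_eq']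


end eqs

/-- Given UPBs `S_ij` of `ℂ^{m_i} ⊗ ℂ^{n_j}` with missing numbers `k_ij`,
embedded as the four blocks of `(m₁+m₂) × (n₁+n₂)` matrices, their union is a
UPB of `ℂ^{m₁+m₂} ⊗ ℂ^{n₁+n₂}` with missing number `k₁₁ + k₁₂ + k₂₁ + k₂₂`. -/
theorem four_block_union_is_UPB {m₁ m₂ n₁ n₂ k₁₁ k₁₂ k₂₁ k₂₂ : ℕ}
    (S₁₁ : Finset (Matrix (Fin m₁) (Fin n₁) ℂ))
    (S₁₂ : Finset (Matrix (Fin m₁) (Fin n₂) ℂ))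
    (S₂₁ : Finset (Matrix (Fin m₂) (Fin n₁) ℂ))
    (S₂₂ : Finset (Matrix (Fin m₂) (Fin n₂) ℂ))
    (h₁₁ : IsUPB S₁₁) (h₁₂ : IsUPB S₁₂) (h₂₁ : IsUPB S₂₁) (h₂₂ : IsUPB S₂₂)
    (hc₁₁ : S₁₁.card = m₁ * n₁ - k₁₁) (hc₁₂ : S₁₂.card = m₁ * n₂ - k₁₂)
    (hc₂₁ : S₂₁.card = m₂ * n₁ - k₂₁) (hc₂₂ : S₂₂.card = m₂ * n₂ - k₂₂) :
    IsUPB (S₁₁.image (e11 (m₂ := m₂) (n₂ := n₂)) ∪ S₁₂.image (e12 (m₂ := m₂) (n₁ := n₁)) ∪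
           S₂₁.image (e21 (m₁ := m₁) (n₂ := n₂)) ∪ S₂₂.image (e22 (m₁ := m₁) (n₁ := n₁))) ∧
    (S₁₁.image (e11 (m₂ := m₂) (n₂ := n₂)) ∪ S₁₂.image (e12 (m₂ := m₂) (n₁ := n₁)) ∪
     S₂₁.image (e21 (m₁ := m₁) (n₂ := n₂)) ∪ S₂₂.image (e22 (m₁ := m₁) (n₁ := n₁))).card =
      (m₁ + m₂) * (n₁ + n₂) - (k₁₁ + k₁₂ + k₂₁ + k₂₂) := by
  have hf1 : Function.Injective (Fin.castAdd m₂ : Fin m₁ → _) := Fin.castAdd_injective _ _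
  have hf2 : Function.Injective (Fin.natAdd m₁ : Fin m₂ → _) := natAdd_inj _ _
  have hg1 : Function.Injective (Fin.castAdd n₂ : Fin n₁ → _) := Fin.castAdd_injective _ _
  have hg2 : Function.Injective (Fin.natAdd n₁ : Fin n₂ → _) := natAdd_inj _ _
  have hn11 : ∀ A ∈ S₁₁, frob A A = 1 := fun A hA => by simpa using h₁₁.2.1 A hA A hA
  have hn12 : ∀ A ∈ S₁₂, frob A A = 1 := fun A hA => by simpa using h₁₂.2.1 A hA A hA
  have hn21 : ∀ A ∈ S₂₁, frob A A = 1 := fun A hA => by simpa using h₂₁.2.1 A hA A hA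
  have hn22 : ∀ A ∈ S₂₂, frob A A = 1 := fun A hA => by simpa using h₂₂.2.1 A hA A hA
  rw [show (e11 (m₁ := m₁) (m₂ := m₂) (n₁ := n₁) (n₂ := n₂)) =
        scat (Fin.castAdd m₂) (Fin.castAdd n₂) from funext e11_eq,
      show (e12 (m₁ := m₁) (m₂ := m₂) (n₁ := n₁) (n₂ := n₂)) =
        scat (Fin.castAdd m₂) (Fin.natAdd n₁) from funext e12_eq,
      show (e21 (m₁ := m₁) (m₂ := m₂) (n₁ := n₁) (n₂ := n₂)) =
        scat (Fin.natAdd m₁) (Fin.castAdd n₂) from funext e21_eq,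
      show (e22 (m₁ := m₁) (m₂ := m₂) (n₁ := n₁) (n₂ := n₂)) =
        scat (Fin.natAdd m₁) (Fin.natAdd n₁) from funext e22_eq]
  set X₁ := S₁₁.image (scat (Fin.castAdd m₂) (Fin.castAdd n₂)) with hX₁
  set X₂ := S₁₂.image (scat (Fin.castAdd m₂) (Fin.natAdd n₁)) with hX₂
  set X₃ := S₂₁.image (scat (Fin.natAdd m₁) (Fin.castAdd n₂)) with hX₃
  set X₄ := S₂₂.image (scat (Fin.natAdd m₁) (Fin.natAdd n₁)) with hX₄
  have memT : ∀ {M}, M ∈ X₁ ∪ X₂ ∪ X₃ ∪ X₄ →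
      (∃ A ∈ S₁₁, scat (Fin.castAdd m₂) (Fin.castAdd n₂) A = M) ∨
      (∃ A ∈ S₁₂, scat (Fin.castAdd m₂) (Fin.natAdd n₁) A = M) ∨
      (∃ A ∈ S₂₁, scat (Fin.natAdd m₁) (Fin.castAdd n₂) A = M) ∨
      (∃ A ∈ S₂₂, scat (Fin.natAdd m₁) (Fin.natAdd n₁) A = M) := by
    intro M hM
    simp only [hX₁, hX₂, hX₃, hX₄, Finset.mem_union, Finset.mem_image] at hM
    rcases hM with ((h | h) | h) | h
    · exact Or.inl h
    · exact Or.inr (Or.inl h)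
    · exact Or.inr (Or.inr (Or.inl h))
    · exact Or.inr (Or.inr (Or.inr h))
  -- disjointness of the four images
  have disjproof : ∀ {p q p' q' : ℕ} {f : Fin p → Fin (m₁ + m₂)} {g : Fin q → Fin (n₁ + n₂)}
      {f' : Fin p' → Fin (m₁ + m₂)} {g' : Fin q' → Fin (n₁ + n₂)}
      (hf : Function.Injective f) (hg : Function.Injective g)
      (hd : (∀ a a', f a ≠ f' a') ∨ (∀ b b', g b ≠ g' b'))
      (S : Finset (Matrix (Fin p) (Fin q) ℂ)) (S' : Finset (Matrix (Fin p') (Fin q') ℂ))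
      (hS : ∀ A ∈ S, frob A A = 1),
      Disjoint (S.image (scat f g)) (S'.image (scat f' g')) := by
    intro p q p' q' f g f' g' hf hg hd S S' hS
    rw [Finset.disjoint_left]
    rintro M hM1 hM2
    obtain ⟨A, hA, rfl⟩ := Finset.mem_image.mp hM1
    obtain ⟨B, hB, hBe⟩ := Finset.mem_image.mp hM2
    have hMM : frob (scat f g A) (scat f g A) = 1 := by
      rw [frob_scat_same hf hg]; exact hS A hA
    have hz : frob (scat f g A) (scat f' g' B) = 0 := frob_scat_disj hd A B
    rw [hBe, hMM] at hz
    exact one_ne_zero hz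
  have d12 : Disjoint X₁ X₂ :=
    disjproof hf1 hg1 (Or.inr fun x x' => castAdd_ne_natAdd x x') _ _ hn11
  have d13 : Disjoint X₁ X₃ :=
    disjproof hf1 hg1 (Or.inl fun x x' => castAdd_ne_natAdd x x') _ _ hn11
  have d14 : Disjoint X₁ X₄ :=
    disjproof hf1 hg1 (Or.inl fun x x' => castAdd_ne_natAdd x x') _ _ hn11
  have d23 : Disjoint X₂ X₃ :=
    disjproof hf1 hg2 (Or.inl fun x x' => castAdd_ne_natAdd x x') _ _ hn12
  have d24 : Disjoint X₂ X₄ :=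
    disjproof hf1 hg2 (Or.inl fun x x' => castAdd_ne_natAdd x x') _ _ hn12
  have d34 : Disjoint X₃ X₄ :=
    disjproof hf2 hg1 (Or.inr fun x x' => castAdd_ne_natAdd x x') _ _ hn21
  have hcard : (X₁ ∪ X₂ ∪ X₃ ∪ X₄).card = S₁₁.card + S₁₂.card + S₂₁.card + S₂₂.card := by
    rw [Finset.card_union_of_disjoint, Finset.card_union_of_disjoint,
        Finset.card_union_of_disjoint d12]
    · rw [hX₁, hX₂, hX₃, hX₄, Finset.card_image_of_injective _ (scat_injective hf1 hg1),
        Finset.card_image_of_injective _ (scat_injective hf1 hg2),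
        Finset.card_image_of_injective _ (scat_injective hf2 hg1),
        Finset.card_image_of_injective _ (scat_injective hf2 hg2)]
    · exact Finset.disjoint_union_left.mpr ⟨d13, d23⟩
    · exact Finset.disjoint_union_left.mpr ⟨Finset.disjoint_union_left.mpr ⟨d14, d24⟩, d34⟩
  have harith11 : S₁₁.card + k₁₁ = m₁ * n₁ ∧ 1 ≤ k₁₁ := by
    have h1 := (isUPB_nonempty h₁₁).card_pos
    have h2 := h₁₁.2.2.1
    omega
  have harith12 : S₁₂.card + k₁₂ = m₁ * n₂ ∧ 1 ≤ k₁₂ := by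
    have h1 := (isUPB_nonempty h₁₂).card_pos
    have h2 := h₁₂.2.2.1
    omega
  have harith21 : S₂₁.card + k₂₁ = m₂ * n₁ ∧ 1 ≤ k₂₁ := by
    have h1 := (isUPB_nonempty h₂₁).card_pos
    have h2 := h₂₁.2.2.1
    omega
  have harith22 : S₂₂.card + k₂₂ = m₂ * n₂ ∧ 1 ≤ k₂₂ := by
    have h1 := (isUPB_nonempty h₂₂).card_pos
    have h2 := h₂₂.2.2.1
    omega
  have hexp : (m₁ + m₂) * (n₁ + n₂) = m₁ * n₁ + m₁ * n₂ + m₂ * n₁ + m₂ * n₂ := by ring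
  refine ⟨⟨?_, ?_, ?_, ?_⟩, ?_⟩
  · -- rank one
    intro M hM
    rcases memT hM with ⟨A, hA, rfl⟩ | ⟨A, hA, rfl⟩ | ⟨A, hA, rfl⟩ | ⟨A, hA, rfl⟩
    · rw [rank_scat hf1 hg1]; exact h₁₁.1 A hA
    · rw [rank_scat hf1 hg2]; exact h₁₂.1 A hA
    · rw [rank_scat hf2 hg1]; exact h₂₁.1 A hA
    · rw [rank_scat hf2 hg2]; exact h₂₂.1 A hA
  · -- orthonormality
    intro M hM N hN
    rcases memT hM with ⟨A, hA, rfl⟩ | ⟨A, hA, rfl⟩ | ⟨A, hA, rfl⟩ | ⟨A, hA, rfl⟩ <;>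
    rcases memT hN with ⟨B, hB, rfl⟩ | ⟨B, hB, rfl⟩ | ⟨B, hB, rfl⟩ | ⟨B, hB, rfl⟩
    · rw [frob_scat_same hf1 hg1, h₁₁.2.1 A hA B hB]
      simp [(scat_injective hf1 hg1).eq_iff]
    · have hMM : frob (scat (Fin.castAdd m₂) (Fin.castAdd n₂) A) (scat (Fin.castAdd m₂) (Fin.castAdd n₂) A) = 1 := by
        rw [frob_scat_same hf1 hg1]; exact hn11 A hA
      have hz : frob (scat (Fin.castAdd m₂) (Fin.castAdd n₂) A) (scat (Fin.castAdd m₂) (Fin.natAdd n₁) B) = 0 :=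
        frob_scat_disj (Or.inr fun x x' => castAdd_ne_natAdd x x') A B
      rw [hz, if_neg (ne_of_frob hMM hz)]
    · have hMM : frob (scat (Fin.castAdd m₂) (Fin.castAdd n₂) A) (scat (Fin.castAdd m₂) (Fin.castAdd n₂) A) = 1 := by
        rw [frob_scat_same hf1 hg1]; exact hn11 A hA
      have hz : frob (scat (Fin.castAdd m₂) (Fin.castAdd n₂) A) (scat (Fin.natAdd m₁) (Fin.castAdd n₂) B) = 0 :=
        frob_scat_disj (Or.inl fun x x' => castAdd_ne_natAdd x x') A B
      rw [hz, if_neg (ne_of_frob hMM hz)]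
    · have hMM : frob (scat (Fin.castAdd m₂) (Fin.castAdd n₂) A) (scat (Fin.castAdd m₂) (Fin.castAdd n₂) A) = 1 := by
        rw [frob_scat_same hf1 hg1]; exact hn11 A hA
      have hz : frob (scat (Fin.castAdd m₂) (Fin.castAdd n₂) A) (scat (Fin.natAdd m₁) (Fin.natAdd n₁) B) = 0 :=
        frob_scat_disj (Or.inl fun x x' => castAdd_ne_natAdd x x') A B
      rw [hz, if_neg (ne_of_frob hMM hz)]
    · have hMM : frob (scat (Fin.castAdd m₂) (Fin.natAdd n₁) A) (scat (Fin.castAdd m₂) (Fin.natAdd n₁) A) = 1 := by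
        rw [frob_scat_same hf1 hg2]; exact hn12 A hA
      have hz : frob (scat (Fin.castAdd m₂) (Fin.natAdd n₁) A) (scat (Fin.castAdd m₂) (Fin.castAdd n₂) B) = 0 :=
        frob_scat_disj (Or.inr fun x x' => natAdd_ne_castAdd x x') A B
      rw [hz, if_neg (ne_of_frob hMM hz)]
    · rw [frob_scat_same hf1 hg2, h₁₂.2.1 A hA B hB]
      simp [(scat_injective hf1 hg2).eq_iff]
    · have hMM : frob (scat (Fin.castAdd m₂) (Fin.natAdd n₁) A) (scat (Fin.castAdd m₂) (Fin.natAdd n₁) A) = 1 := by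
        rw [frob_scat_same hf1 hg2]; exact hn12 A hA
      have hz : frob (scat (Fin.castAdd m₂) (Fin.natAdd n₁) A) (scat (Fin.natAdd m₁) (Fin.castAdd n₂) B) = 0 :=
        frob_scat_disj (Or.inl fun x x' => castAdd_ne_natAdd x x') A B
      rw [hz, if_neg (ne_of_frob hMM hz)]
    · have hMM : frob (scat (Fin.castAdd m₂) (Fin.natAdd n₁) A) (scat (Fin.castAdd m₂) (Fin.natAdd n₁) A) = 1 := by
        rw [frob_scat_same hf1 hg2]; exact hn12 A hA
      have hz : frob (scat (Fin.castAdd m₂) (Fin.natAdd n₁) A) (scat (Fin.natAdd m₁) (Fin.natAdd n₁) B) = 0 :=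
        frob_scat_disj (Or.inl fun x x' => castAdd_ne_natAdd x x') A B
      rw [hz, if_neg (ne_of_frob hMM hz)]
    · have hMM : frob (scat (Fin.natAdd m₁) (Fin.castAdd n₂) A) (scat (Fin.natAdd m₁) (Fin.castAdd n₂) A) = 1 := by
        rw [frob_scat_same hf2 hg1]; exact hn21 A hA
      have hz : frob (scat (Fin.natAdd m₁) (Fin.castAdd n₂) A) (scat (Fin.castAdd m₂) (Fin.castAdd n₂) B) = 0 :=
        frob_scat_disj (Or.inl fun x x' => natAdd_ne_castAdd x x') A B
      rw [hz, if_neg (ne_of_frob hMM hz)]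
    · have hMM : frob (scat (Fin.natAdd m₁) (Fin.castAdd n₂) A) (scat (Fin.natAdd m₁) (Fin.castAdd n₂) A) = 1 := by
        rw [frob_scat_same hf2 hg1]; exact hn21 A hA
      have hz : frob (scat (Fin.natAdd m₁) (Fin.castAdd n₂) A) (scat (Fin.castAdd m₂) (Fin.natAdd n₁) B) = 0 :=
        frob_scat_disj (Or.inl fun x x' => natAdd_ne_castAdd x x') A B
      rw [hz, if_neg (ne_of_frob hMM hz)]
    · rw [frob_scat_same hf2 hg1, h₂₁.2.1 A hA B hB]
      simp [(scat_injective hf2 hg1).eq_iff]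
    · have hMM : frob (scat (Fin.natAdd m₁) (Fin.castAdd n₂) A) (scat (Fin.natAdd m₁) (Fin.castAdd n₂) A) = 1 := by
        rw [frob_scat_same hf2 hg1]; exact hn21 A hA
      have hz : frob (scat (Fin.natAdd m₁) (Fin.castAdd n₂) A) (scat (Fin.natAdd m₁) (Fin.natAdd n₁) B) = 0 :=
        frob_scat_disj (Or.inr fun x x' => castAdd_ne_natAdd x x') A B
      rw [hz, if_neg (ne_of_frob hMM hz)]
    · have hMM : frob (scat (Fin.natAdd m₁) (Fin.natAdd n₁) A) (scat (Fin.natAdd m₁) (Fin.natAdd n₁) A) = 1 := by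
        rw [frob_scat_same hf2 hg2]; exact hn22 A hA
      have hz : frob (scat (Fin.natAdd m₁) (Fin.natAdd n₁) A) (scat (Fin.castAdd m₂) (Fin.castAdd n₂) B) = 0 :=
        frob_scat_disj (Or.inl fun x x' => natAdd_ne_castAdd x x') A B
      rw [hz, if_neg (ne_of_frob hMM hz)]
    · have hMM : frob (scat (Fin.natAdd m₁) (Fin.natAdd n₁) A) (scat (Fin.natAdd m₁) (Fin.natAdd n₁) A) = 1 := by
        rw [frob_scat_same hf2 hg2]; exact hn22 A hA
      have hz : frob (scat (Fin.natAdd m₁) (Fin.natAdd n₁) A) (scat (Fin.castAdd m₂) (Fin.natAdd n₁) B) = 0 :=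
        frob_scat_disj (Or.inl fun x x' => natAdd_ne_castAdd x x') A B
      rw [hz, if_neg (ne_of_frob hMM hz)]
    · have hMM : frob (scat (Fin.natAdd m₁) (Fin.natAdd n₁) A) (scat (Fin.natAdd m₁) (Fin.natAdd n₁) A) = 1 := by
        rw [frob_scat_same hf2 hg2]; exact hn22 A hA
      have hz : frob (scat (Fin.natAdd m₁) (Fin.natAdd n₁) A) (scat (Fin.natAdd m₁) (Fin.castAdd n₂) B) = 0 :=
        frob_scat_disj (Or.inr fun x x' => natAdd_ne_castAdd x x') A B
      rw [hz, if_neg (ne_of_frob hMM hz)]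
    · rw [frob_scat_same hf2 hg2, h₂₂.2.1 A hA B hB]
      simp [(scat_injective hf2 hg2).eq_iff]
  · -- card bound
    rw [hcard]
    omega
  · -- unextendibility
    intro N hN0 horth
    have o11 : ∀ A ∈ S₁₁, frob A (N.submatrix (Fin.castAdd m₂) (Fin.castAdd n₂)) = 0 :=
      fun A hA => by
        rw [← frob_scat]
        exact horth _ (Finset.mem_union_left _ (Finset.mem_union_left _
          (Finset.mem_union_left _ (Finset.mem_image_of_mem _ hA))))
    have o12 : ∀ A ∈ S₁₂, frob A (N.submatrix (Fin.castAdd m₂) (Fin.natAdd n₁)) = 0 :=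
      fun A hA => by
        rw [← frob_scat]
        exact horth _ (Finset.mem_union_left _ (Finset.mem_union_left _
          (Finset.mem_union_right _ (Finset.mem_image_of_mem _ hA))))
    have o21 : ∀ A ∈ S₂₁, frob A (N.submatrix (Fin.natAdd m₁) (Fin.castAdd n₂)) = 0 :=
      fun A hA => by
        rw [← frob_scat]
        exact horth _ (Finset.mem_union_left _ (Finset.mem_union_right _
          (Finset.mem_image_of_mem _ hA)))
    have o22 : ∀ A ∈ S₂₂, frob A (N.submatrix (Fin.natAdd m₁) (Fin.natAdd n₁)) = 0 :=
      fun A hA => by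
        rw [← frob_scat]
        exact horth _ (Finset.mem_union_right _ (Finset.mem_image_of_mem _ hA))
    by_cases hz11 : N.submatrix (Fin.castAdd m₂) (Fin.castAdd n₂) = 0
    · by_cases hz12 : N.submatrix (Fin.castAdd m₂) (Fin.natAdd n₁) = 0
      · by_cases hz21 : N.submatrix (Fin.natAdd m₁) (Fin.castAdd n₂) = 0
        · by_cases hz22 : N.submatrix (Fin.natAdd m₁) (Fin.natAdd n₁) = 0
          · exfalso
            apply hN0
            ext i j
            by_cases hi : (i : ℕ) < m₁ <;> by_cases hj : (j : ℕ) < n₁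
            · have hii : i = Fin.castAdd m₂ ⟨i, hi⟩ := by rw [Fin.ext_iff]; simp
              have hjj : j = Fin.castAdd n₂ ⟨j, hj⟩ := by rw [Fin.ext_iff]; simp
              have := congrFun (congrFun hz11 ⟨i, hi⟩) ⟨j, hj⟩
              simpa [Matrix.submatrix_apply, ← hii, ← hjj] using this
            · have hii : i = Fin.castAdd m₂ ⟨i, hi⟩ := by rw [Fin.ext_iff]; simp
              have hjj : j = Fin.natAdd n₁ ⟨(j : ℕ) - n₁, by have := j.isLt; omega⟩ := by
                rw [Fin.ext_iff]; simp; omega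
              have := congrFun (congrFun hz12 ⟨i, hi⟩) ⟨(j : ℕ) - n₁, by have := j.isLt; omega⟩
              simpa [Matrix.submatrix_apply, ← hii, ← hjj] using this
            · have hii : i = Fin.natAdd m₁ ⟨(i : ℕ) - m₁, by have := i.isLt; omega⟩ := by
                rw [Fin.ext_iff]; simp; omega
              have hjj : j = Fin.castAdd n₂ ⟨j, hj⟩ := by rw [Fin.ext_iff]; simp
              have := congrFun (congrFun hz21 ⟨(i : ℕ) - m₁, by have := i.isLt; omega⟩) ⟨j, hj⟩
              simpa [Matrix.submatrix_apply, ← hii, ← hjj] using this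
            · have hii : i = Fin.natAdd m₁ ⟨(i : ℕ) - m₁, by have := i.isLt; omega⟩ := by
                rw [Fin.ext_iff]; simp; omega
              have hjj : j = Fin.natAdd n₁ ⟨(j : ℕ) - n₁, by have := j.isLt; omega⟩ := by
                rw [Fin.ext_iff]; simp; omega
              have := congrFun (congrFun hz22 ⟨(i : ℕ) - m₁, by have := i.isLt; omega⟩)
                ⟨(j : ℕ) - n₁, by have := j.isLt; omega⟩
              simpa [Matrix.submatrix_apply, ← hii, ← hjj] using this
          · exact (h₂₂.2.2.2 _ hz22 o22).trans (rank_submatrix_le' N _ _)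
        · exact (h₂₁.2.2.2 _ hz21 o21).trans (rank_submatrix_le' N _ _)
      · exact (h₁₂.2.2.2 _ hz12 o12).trans (rank_submatrix_le' N _ _)
    · exact (h₁₁.2.2.2 _ hz11 o11).trans (rank_submatrix_le' N _ _)
  · -- card formula
    rw [hcard]
    omega
end

section
/- Let m ≥ 2 and n ≥ 10 be integers. Then every integer l with 4m + 4 < l < 2m(n − 8) can be written as l = a + b where a ∈ {2m(k−1) : 3 ≤ k ≤ n−7} ∪ {0} and b is an integer with 4 ≤ b ≤ 12m − 8 or b = 0. -/
/-- For `m ≥ 2`, `n ≥ 10`, every integer `l` with `4m + 4 < l < 2m(n − 8)` can be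
written as `l = a + b` with `a ∈ {2m(k−1) : 3 ≤ k ≤ n−7} ∪ {0}` and `b = 0` or
`4 ≤ b ≤ 12m − 8`. -/
theorem missing_number_decomposition_odd (m n : ℕ) (hm : 2 ≤ m) (hn : 10 ≤ n)
    (l : ℕ) (h1 : 4 * m + 4 < l) (h2 : l < 2 * m * (n - 8)) :
    ∃ a b : ℕ, l = a + b ∧
      (a = 0 ∨ ∃ k : ℕ, 3 ≤ k ∧ k ≤ n - 7 ∧ a = 2 * m * (k - 1)) ∧
      (b = 0 ∨ (4 ≤ b ∧ b ≤ 12 * m - 8)) := by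
  have h2m : 0 < 2 * m := by omega
  set j := (l - 4) / (2 * m) with hj
  have hdm := Nat.div_add_mod (l - 4) (2 * m)
  have hmod := Nat.mod_lt (l - 4) h2m
  rw [← hj] at hdm
  have hj2 : 2 ≤ j := by
    rw [hj, Nat.le_div_iff_mul_le h2m]; omega
  have hjle : 2 * m * j ≤ l - 4 := by omega
  have hlt : 2 * m * j < 2 * m * (n - 8) := by omega
  have hjlt : j < n - 8 := lt_of_mul_lt_mul_left hlt (by omega)
  refine ⟨2 * m * j, l - 2 * m * j, by omega, Or.inr ⟨j + 1, by omega, by omega,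
    by simp⟩, Or.inr ⟨by omega, by omega⟩⟩
end

section
/- In ℂ³ ⊗ ℂ³ with standard basis {|0⟩, |1⟩, |2⟩} on each factor, the five normalized product states (1/√2)|0⟩(|0⟩−|1⟩), (1/√2)(|0⟩−|1⟩)|2⟩, (1/√2)(|1⟩−|2⟩)|0⟩, (1/√2)|2⟩(|1⟩−|2⟩), (1/3)(|0⟩+|1⟩+|2⟩)(|0⟩+|1⟩+|2⟩) form an unextendible product basis: they are pairwise orthonormal product states, and no nonzero product state of ℂ³ ⊗ ℂ³ is orthogonal to all five. -/
/-- The product state `v ⊗ w` of `ℂ³ ⊗ ℂ³`, modelled as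
`EuclideanSpace ℂ (Fin 3 × Fin 3)`. -/
noncomputable def pv (v w : Fin 3 → ℂ) : EuclideanSpace ℂ (Fin 3 × Fin 3) :=
  WithLp.toLp 2 (fun p => v p.1 * w p.2)

/-- The five states of the 'Tiles' UPB of Bennett et al. -/
noncomputable def tiles : Fin 5 → EuclideanSpace ℂ (Fin 3 × Fin 3) :=
  ![((Real.sqrt 2 : ℝ) : ℂ)⁻¹ • pv ![1, 0, 0] ![1, -1, 0],
    ((Real.sqrt 2 : ℝ) : ℂ)⁻¹ • pv ![1, -1, 0] ![0, 0, 1],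
    ((Real.sqrt 2 : ℝ) : ℂ)⁻¹ • pv ![0, 1, -1] ![1, 0, 0],
    ((Real.sqrt 2 : ℝ) : ℂ)⁻¹ • pv ![0, 0, 1] ![0, 1, -1],
    ((3 : ℂ))⁻¹ • pv ![1, 1, 1] ![1, 1, 1]]

/-! Write the tiles as `c i • a i ⊗ b i`. A product vector `v ⊗ w` orthogonal to all of them has,
for each `i`, `a i ⬝ v = 0` or `b i ⬝ w = 0`. Any three of the `a i` span `ℂ³` (every `3 × 3` minor
is nonzero), and so do any three of the `b i`, which are the `a i` relabelled. Since
`5 = 2 + 2 + 1`, one of the two alternatives holds for three indices, forcing `v = 0` or `w = 0`. -/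

open Matrix Finset ComplexConjugate

lemma card_le_filter_or_card_le_filter {ι : Type*} [Fintype ι] (P Q : ι → Prop)
    [DecidablePred P] [DecidablePred Q] (hPQ : ∀ i, P i ∨ Q i) {k l : ℕ}
    (hkl : k + l ≤ Fintype.card ι + 1) : k ≤ #{i | P i} ∨ l ≤ #{i | Q i} := by
  classical
  have hcover : univ ⊆ ({i | P i} : Finset ι) ∪ ({i | Q i} : Finset ι) := fun i _ => by
    simpa using hPQ i
  have := (card_le_card hcover).trans (card_union_le _ _)
  rw [card_univ] at this
  omega

/-- Over a field this says that any `k` of the vectors `x i` span `K^n`. -/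
def IsDotSeparating {ι K n : Type*} [Fintype n] [Semiring K] (k : ℕ) (x : ι → n → K) : Prop :=
  ∀ S : Finset ι, k ≤ #S → ∀ v : n → K, (∀ i ∈ S, x i ⬝ᵥ v = 0) → v = 0

lemma IsDotSeparating.comp_injective {ι κ K n : Type*} [Fintype n] [Semiring K] {k : ℕ}
    {x : ι → n → K} (hx : IsDotSeparating k x) {σ : κ → ι} (hσ : Function.Injective σ) :
    IsDotSeparating k (x ∘ σ) := fun S hS v hv =>
  hx (S.map ⟨σ, hσ⟩) (by rwa [card_map]) v (by simpa using hv)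

lemma isDotSeparating_of_det_ne_zero {ι K : Type*} [CommRing K] [NoZeroDivisors K] {n : ℕ}
    {x : ι → Fin n → K}
    (hx : ∀ f : Fin n → ι, Function.Injective f → (of fun r => x (f r)).det ≠ 0) :
    IsDotSeparating n x := by
  intro S hS v hv
  obtain ⟨T, hTS, hT⟩ := exists_subset_card_eq hS
  let f : Fin n → ι := fun r => T.equivFin.symm (Fin.cast hT.symm r)
  have hf : Function.Injective f := fun r s hrs => by
    simpa [f, Subtype.ext_iff.symm] using hrs
  exact eq_zero_of_mulVec_eq_zero (hx f hf) (funext fun r => hv _ (hTS (T.equivFin.symm _).2))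

theorem eq_zero_or_eq_zero_of_dotProduct_mul_dotProduct_eq_zero {ι K m n : Type*} [Fintype ι]
    [Fintype m] [Fintype n] [Semiring K] [NoZeroDivisors K] {x : ι → m → K} {y : ι → n → K}
    {k l : ℕ} (hx : IsDotSeparating k x) (hy : IsDotSeparating l y)
    (hkl : k + l ≤ Fintype.card ι + 1) {v : m → K} {w : n → K}
    (h : ∀ i, (x i ⬝ᵥ v) * (y i ⬝ᵥ w) = 0) : v = 0 ∨ w = 0 := by
  classical
  rcases card_le_filter_or_card_le_filter _ _ (fun i => mul_eq_zero.mp (h i)) hkl with hS | hT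
  · exact Or.inl (hx _ hS v fun i hi => (mem_filter.mp hi).2)
  · exact Or.inr (hy _ hT w fun i hi => (mem_filter.mp hi).2)

lemma pv_zero_left (w : Fin 3 → ℂ) : pv 0 w = 0 := by
  ext p; simp [pv]

lemma pv_zero_right (v : Fin 3 → ℂ) : pv v 0 = 0 := by
  ext p; simp [pv]

lemma smul_pv (c : ℂ) (v w : Fin 3 → ℂ) : c • pv v w = pv (c • v) w := by
  ext p; simp [pv, mul_assoc]

lemma inner_pv (a b v w : Fin 3 → ℂ) :
    (inner ℂ (pv a b) (pv v w) : ℂ) = (star a ⬝ᵥ v) * (star b ⬝ᵥ w) := by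
  simp only [PiLp.inner_apply, RCLike.inner_apply, pv, Fintype.sum_prod_type, dotProduct,
    Finset.sum_mul_sum, Pi.star_apply]
  refine Finset.sum_congr rfl fun i _ => Finset.sum_congr rfl fun j _ => ?_
  simp only [map_mul, RCLike.star_def]
  ring

noncomputable def tileScale : Fin 5 → ℂ :=
  ![((Real.sqrt 2 : ℝ) : ℂ)⁻¹, ((Real.sqrt 2 : ℝ) : ℂ)⁻¹, ((Real.sqrt 2 : ℝ) : ℂ)⁻¹,
    ((Real.sqrt 2 : ℝ) : ℂ)⁻¹, (3 : ℂ)⁻¹]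

def tileLeft : Fin 5 → Fin 3 → ℂ :=
  ![![1, 0, 0], ![1, -1, 0], ![0, 1, -1], ![0, 0, 1], ![1, 1, 1]]

def tileRight : Fin 5 → Fin 3 → ℂ :=
  ![![1, -1, 0], ![0, 0, 1], ![1, 0, 0], ![0, 1, -1], ![1, 1, 1]]

lemma tiles_eq_smul_pv (i : Fin 5) : tiles i = tileScale i • pv (tileLeft i) (tileRight i) := by
  fin_cases i <;> rfl

lemma tileRight_eq_tileLeft_comp : tileRight = tileLeft ∘ ![1, 3, 0, 2, 4] := by
  ext i : 1; fin_cases i <;> rfl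

lemma star_tileLeft (i : Fin 5) : star (tileLeft i) = tileLeft i := by
  fin_cases i <;> ext j <;> fin_cases j <;> simp [tileLeft]

lemma star_tileRight (i : Fin 5) : star (tileRight i) = tileRight i := by
  rw [tileRight_eq_tileLeft_comp]
  exact star_tileLeft _

lemma inner_tiles_pv (i : Fin 5) (v w : Fin 3 → ℂ) :
    (inner ℂ (tiles i) (pv v w) : ℂ) =
      conj (tileScale i) * ((tileLeft i ⬝ᵥ v) * (tileRight i ⬝ᵥ w)) := by
  rw [tiles_eq_smul_pv, inner_smul_left, inner_pv, star_tileLeft, star_tileRight]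

lemma inner_tiles (i j : Fin 5) :
    (inner ℂ (tiles i) (tiles j) : ℂ) = if i = j then 1 else 0 := by
  rw [tiles_eq_smul_pv j, inner_smul_right, inner_tiles_pv]
  fin_cases i <;> fin_cases j <;>
    simp [tileScale, tileLeft, tileRight, dotProduct, Fin.sum_univ_three, map_ofNat] <;>
    norm_num [← mul_assoc, ← mul_inv, ← Complex.ofReal_mul]

lemma tileLeft_isDotSeparating : IsDotSeparating 3 tileLeft := by
  refine isDotSeparating_of_det_ne_zero fun f hf => ?_
  obtain ⟨i, j, k, rfl⟩ : ∃ i j k, f = ![i, j, k] :=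
    ⟨f 0, f 1, f 2, by ext r; fin_cases r <;> rfl⟩
  fin_cases i <;> fin_cases j <;> fin_cases k <;>
    first
      | exact absurd hf (by decide)
      | simp [det_fin_three, tileLeft] <;> norm_num

lemma tileRight_isDotSeparating : IsDotSeparating 3 tileRight :=
  tileRight_eq_tileLeft_comp ▸ tileLeft_isDotSeparating.comp_injective (by decide)

lemma tiles_isProduct (i : Fin 5) :
    ∃ v w : Fin 3 → ℂ, v ≠ 0 ∧ w ≠ 0 ∧ tiles i = pv v w := by
  have hne : tiles i ≠ 0 := fun h => by simpa [h] using inner_tiles i i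
  rw [tiles_eq_smul_pv, smul_pv] at hne ⊢
  exact ⟨_, _, fun h => hne (by rw [h, pv_zero_left]), fun h => hne (by rw [h, pv_zero_right]),
    rfl⟩

/-- The five 'Tiles' states form an unextendible product basis of `ℂ³ ⊗ ℂ³`:
they are pairwise orthonormal product states, and no nonzero product state is
orthogonal to all five. -/
theorem tiles_is_UPB :
    (∀ i : Fin 5, ∃ v w : Fin 3 → ℂ, v ≠ 0 ∧ w ≠ 0 ∧ tiles i = pv v w) ∧
    (∀ i j : Fin 5, (inner ℂ (tiles i) (tiles j) : ℂ) = if i = j then 1 else 0) ∧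
    (∀ v w : Fin 3 → ℂ, v ≠ 0 → w ≠ 0 →
      ¬ (∀ i : Fin 5, (inner ℂ (tiles i) (pv v w) : ℂ) = 0)) := by
  refine ⟨tiles_isProduct, inner_tiles, fun v w hv hw h => ?_⟩
  have hfactor (i : Fin 5) : (tileLeft i ⬝ᵥ v) * (tileRight i ⬝ᵥ w) = 0 := by
    have hscale : conj (tileScale i) ≠ 0 := by
      fin_cases i <;> simp [tileScale]
    simpa [inner_tiles_pv, hscale] using h i
  rcases eq_zero_or_eq_zero_of_dotProduct_mul_dotProduct_eq_zero tileLeft_isDotSeparating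
    tileRight_isDotSeparating (by simp) hfactor with rfl | rfl
  exacts [hv rfl, hw rfl]
end

section
/- Let m ≥ 2 and n ≥ 10 be integers. Then every integer l with 4m + 1 < l < (2m−1)(n−8) − 1 can be written as l = a + b where a ∈ {(2m−1)(k−1) − 1 : 3 ≤ k ≤ n−7} ∪ {0} and b is an integer with 4 ≤ b ≤ 12m − 14 or b = 0. -/
/-- For `m ≥ 2`, `n ≥ 10`, every integer `l` with `4m + 1 < l < (2m−1)(n−8) − 1`
can be written as `l = a + b` with
`a ∈ {(2m−1)(k−1) − 1 : 3 ≤ k ≤ n−7} ∪ {0}` and `b = 0` or `4 ≤ b ≤ 12m − 14`. -/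
theorem missing_number_decomposition_even (m n : ℕ) (hm : 2 ≤ m) (hn : 10 ≤ n)
    (l : ℕ) (h1 : 4 * m + 1 < l) (h2 : l < (2 * m - 1) * (n - 8) - 1) :
    ∃ a b : ℕ, l = a + b ∧
      (a = 0 ∨ ∃ k : ℕ, 3 ≤ k ∧ k ≤ n - 7 ∧ a = (2 * m - 1) * (k - 1) - 1) ∧
      (b = 0 ∨ (4 ≤ b ∧ b ≤ 12 * m - 14)) := by
  rcases le_or_gt l (12 * m - 14) with hl | hl
  · exact ⟨0, l, by omega, Or.inl rfl, Or.inr ⟨by omega, hl⟩⟩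
  · set M := 2 * m - 1 with hMdef
    have hM : 3 ≤ M := by omega
    set q := (l - 3) / M with hqdef
    set r := (l - 3) % M with hrdef
    have hdiv : M * q + r = l - 3 := Nat.div_add_mod (l - 3) M
    have hrM : r < M := Nat.mod_lt _ (by omega)
    have hq2 : 2 ≤ q := by
      by_contra h
      have h' : M * q ≤ M * 1 := Nat.mul_le_mul_left M (by omega)
      have : M * 1 = M := by ring
      omega
    have h2q : M * 2 ≤ M * q := Nat.mul_le_mul_left M hq2
    have hlt : M * q < M * (n - 8) := by omega
    have hqn : q < n - 8 := Nat.lt_of_mul_lt_mul_left hlt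
    refine ⟨M * q - 1, r + 4, by omega, Or.inr ⟨q + 1, by omega, by omega, ?_⟩, Or.inr ⟨by omega, by omega⟩⟩
    rw [Nat.add_sub_cancel]
end
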